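/- arXiv:0910.2439 — 3 statements merged into one kernel-verified Lean document; each statement's English description precedes it below -/
import Mathlib

section
/- Let α ∈ ℂ with Re α > 0 and Im α > 0. Then for every r > 0 the function r ↦ φ(α,r) is differentiable at r with derivative √(1 + α² sinh² r) / sinh r (principal square root). -/
/-- `w α r = √(1 + α² sinh² r)` (principal branch). -/
noncomputable def w (α : ℂ) (r : ℝ) : ℂ :=
  (1 + α ^ 2 * (Real.sinh r : ℂ) ^ 2) ^ (1 / 2 : ℂ)

/-- `φ(α,r) = α log((α cosh r + w)/√(α²−1)) + (1/2) log((cosh r − w)/(cosh r + w))`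
(principal branches). -/
noncomputable def phi (α : ℂ) (r : ℝ) : ℂ :=
  α * Complex.log ((α * (Real.cosh r : ℂ) + w α r) / ((α ^ 2 - 1) ^ (1 / 2 : ℂ))) +
    (1 / 2 : ℂ) * Complex.log (((Real.cosh r : ℂ) - w α r) / ((Real.cosh r : ℂ) + w α r))

/-!
Write `s = sinh r`, `c = cosh r`, `W = w α r`, so `W² = 1 + α² s²` and `W' = α² s c / W`.
The derivative of `log (α c + W)` is `(α s + α² s c / W) / (α c + W) = α s / W`, and that of
`(1/2) log ((c - W) / (c + W))` is `(s W - c W') / (c² - W²) = 1 / (s W)` because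
`c² - W² = (1 - α²) s²`. Hence `φ' = α · α s / W + 1 / (s W) = W / s`.
For `Re α, Im α > 0` both `W` and `√(α² - 1)` lie in the upper half-plane, which keeps
`(α c + W) / √(α² - 1)` and `(c - W) / (c + W)` (the latter has negative imaginary part)
off the branch cut of `log`.
-/

open Complex

lemma ne_zero_of_im_pos {z : ℂ} (hz : 0 < z.im) : z ≠ 0 := fun h => hz.ne' (by simp [h])

lemma im_cpow_one_half_pos {z : ℂ} (hz : 0 < z.im) : 0 < (z ^ (1 / 2 : ℂ)).im := by
  rw [one_div, cpow_inv_two_im_eq_sqrt hz.le, Real.sqrt_pos]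
  linarith [(abs_re_lt_norm.mpr hz.ne').trans_le' (le_abs_self z.re)]

lemma div_mem_slitPlane_of_im_pos {z u : ℂ} (hz : 0 < z.im) (hu : 0 < u.im) :
    z / u ∈ slitPlane := by
  rw [mem_slitPlane_iff, or_iff_not_imp_right, not_not]
  intro him
  have : z.im = (z / u).re * u.im := by
    simpa [him] using congrArg im (div_mul_cancel₀ z (ne_zero_of_im_pos hu)).symm
  exact pos_of_mul_pos_left (this ▸ hz) hu.le

lemma im_sub_div_add_neg {c : ℝ} {u : ℂ} (hc : 0 < c) (hu : 0 < u.im) :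
    ((c - u) / (c + u)).im < 0 := by
  have hnum : (c - u).im * (c + u).re - (c - u).re * (c + u).im = -(2 * c * u.im) := by
    simp; ring
  rw [div_im, ← sub_div, hnum]
  exact div_neg_of_neg_of_pos (by nlinarith)
    (normSq_pos.mpr (ne_zero_of_im_pos (by simpa using hu)))

lemma HasDerivAt.cpow_one_half {f : ℝ → ℂ} {f' : ℂ} {x : ℝ} (hf : HasDerivAt f f' x)
    (hx : f x ∈ slitPlane) :
    HasDerivAt (fun t => f t ^ (1 / 2 : ℂ)) (f' / (2 * f x ^ (1 / 2 : ℂ))) x := by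
  have hx0 : f x ≠ 0 := slitPlane_ne_zero hx
  have hsqrt0 : f x ^ (1 / 2 : ℂ) ≠ 0 := by simpa [cpow_eq_zero_iff] using hx0
  have hsq : (f x ^ (1 / 2 : ℂ)) ^ 2 = f x := by simp
  refine ((hasStrictDerivAt_cpow_const hx).hasDerivAt.comp x hf).congr_deriv ?_
  rw [cpow_sub _ _ hx0, cpow_one]
  field_simp
  rw [hsq]

lemma hasDerivAt_w (α : ℂ) (r : ℝ) (h : 1 + α ^ 2 * (Real.sinh r : ℂ) ^ 2 ∈ slitPlane) :
    HasDerivAt (w α) (α ^ 2 * Real.sinh r * Real.cosh r / w α r) r := by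
  have hsinh := (Real.hasDerivAt_sinh r).ofReal_comp
  refine ((((hsinh.pow 2).const_mul (α ^ 2)).const_add 1).cpow_one_half h).congr_deriv ?_
  rw [w, Pi.pow_apply]
  field_simp
  ring

lemma phi_deriv_expr_eq {α s c W K : ℂ} (hs : s ≠ 0) (hW : W ≠ 0) (hK : K ≠ 0)
    (hN : α * c + W ≠ 0) (hp : c + W ≠ 0) (hm : c - W ≠ 0)
    (hW2 : W ^ 2 = 1 + α ^ 2 * s ^ 2) (hc2 : c ^ 2 = s ^ 2 + 1) :
    α * ((α * s + α ^ 2 * s * c / W) / K / ((α * c + W) / K)) +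
      1 / 2 * (((s - α ^ 2 * s * c / W) * (c + W) - (c - W) * (s + α ^ 2 * s * c / W)) /
        (c + W) ^ 2 / ((c - W) / (c + W))) = W / s := by
  field_simp
  linear_combination 2 * (α * c + W) * W ^ 2 * (hW2 - hc2)

/-- For `Re α > 0`, `Im α > 0`, the function `r ↦ φ(α,r)` is differentiable at each
`r > 0` with derivative `√(1 + α² sinh² r)/sinh r`. -/
theorem phi_hasDerivAt (α : ℂ) (hre : 0 < α.re) (him : 0 < α.im)
    (r : ℝ) (hr : 0 < r) :
    HasDerivAt (fun t : ℝ => phi α t)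
      ((1 + α ^ 2 * (Real.sinh r : ℂ) ^ 2) ^ (1 / 2 : ℂ) / (Real.sinh r : ℂ)) r := by
  have hs : 0 < Real.sinh r := Real.sinh_pos_iff.mpr hr
  have hc : 0 < Real.cosh r := Real.cosh_pos r
  have hα2 : 0 < (α ^ 2).im := by rw [sq, mul_im]; nlinarith
  have hz : 0 < (1 + α ^ 2 * (Real.sinh r : ℂ) ^ 2).im := by
    rw [add_im, one_im, zero_add, ← ofReal_pow, im_mul_ofReal]; positivity
  have hW : 0 < (w α r).im := im_cpow_one_half_pos hz
  have hK : 0 < ((α ^ 2 - 1) ^ (1 / 2 : ℂ)).im := im_cpow_one_half_pos (by simpa using hα2)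
  have hN : 0 < (α * Real.cosh r + w α r).im := by
    rw [add_im, im_mul_ofReal]; positivity
  have hp : (Real.cosh r : ℂ) + w α r ≠ 0 := ne_zero_of_im_pos (by simpa using hW)
  have hm : (Real.cosh r : ℂ) - w α r ≠ 0 := fun h => hW.ne' (by simpa using congrArg im h)
  have hcosh := (Real.hasDerivAt_cosh r).ofReal_comp
  have hw := hasDerivAt_w α r (Or.inr hz.ne')
  have h1 := ((((hcosh.const_mul α).add hw).div_const _).clog_real
    (div_mem_slitPlane_of_im_pos hN hK)).const_mul α
  have h2 := (((hcosh.sub hw).div (hcosh.add hw) hp).clog_real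
    (Or.inr (im_sub_div_add_neg hc hW).ne)).const_mul (1 / 2 : ℂ)
  refine (h1.add h2).congr_deriv
    (phi_deriv_expr_eq (ofReal_ne_zero.mpr hs.ne') ?_ ?_ ?_ hp hm ?_ ?_)
  · exact ne_zero_of_im_pos hW
  · exact ne_zero_of_im_pos hK
  · exact ne_zero_of_im_pos hN
  · simp [w]
  · exact_mod_cast Real.cosh_sq r
end

section
/- Fix α ∈ ℂ with Re α > 0 and Im α > 0. Then there exist constants C > 0 and δ > 0 such that |φ(α,r) − log(r/2) − p(α)| ≤ C r² for all 0 < r < δ. -/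
/-- `p(α) = (α/2) log((α+1)/(α−1)) + (1/2) log(1−α²)` (principal branches). -/
noncomputable def pfun (α : ℂ) : ℂ :=
  (α / 2) * Complex.log ((α + 1) / (α - 1)) + (1 / 2 : ℂ) * Complex.log (1 - α ^ 2)

/-!
Since `(cosh r - w)(cosh r + w) = sinh² r · (1 - α²)`, the singular logarithm in `φ` splits as
`log (sinh² r) + log ((1 - α²) / (cosh r + w)²)`. Hence `φ(α,r) - log (r/2) - p(α)` is the sum of
`log (sinh r / r) = O(r²)` and the restriction to the real axis of a function of `z` which is
holomorphic near `0`, even (it only involves `cosh z` and `sinh² z`) and vanishes at `0`; such a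
function is `O(z²)`. The vanishing at `0` amounts to `log ((α+1)/(α-1)) = 2 log ((α+1)/√(α²-1))`,
which holds because `(α+1)/√(α²-1)` lies in the right half-plane when `α` is in the first quadrant.
-/

open Filter Asymptotics Topology Complex

section EvenAnalytic
variable {𝕜 E : Type*} [NontriviallyNormedField 𝕜] [NormedAddCommGroup E] [NormedSpace 𝕜 E]

theorem Function.Even.deriv_zero [CharZero 𝕜] {f : 𝕜 → E} (hf : f.Even) : deriv f 0 = 0 := by
  have h := deriv_comp_neg (f := f) (x := 0)
  rw [show (fun x => f (-x)) = f from funext hf, neg_zero] at h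
  have h2 : (2 : 𝕜) • deriv f 0 = 0 := by rw [two_smul]; nth_rewrite 1 [h]; simp
  simpa using h2

theorem AnalyticAt.isBigO_sq {f : 𝕜 → E} (hf : AnalyticAt 𝕜 f 0) (h0 : f 0 = 0)
    (h1 : deriv f 0 = 0) : f =O[𝓝 0] fun z => z ^ 2 := by
  obtain ⟨p, hp⟩ := hf
  have hc0 : p.coeff 0 = 0 := by simpa [h0] using hp.coeff_zero (fun _ => 1)
  have hc1 : p.coeff 1 = 0 := by simpa [h1] using hp.deriv.symm
  have hsum : ∀ z, p.partialSum 2 z = 0 := fun z => by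
    simp [FormalMultilinearSeries.partialSum, Finset.sum_range_succ, hc0, hc1]
  rw [← isBigO_norm_right]
  simpa [hsum] using hp.isBigO_sub_partialSum_pow 2

end EvenAnalytic

theorem exists_pos_bound_of_isBigO_nhdsGT {E F : Type*} [Norm E] [SeminormedAddCommGroup F]
    {f : ℝ → E} {g : ℝ → F} (h : f =O[𝓝[>] 0] g) :
    ∃ C > (0 : ℝ), ∃ δ > (0 : ℝ), ∀ r, 0 < r → r < δ → ‖f r‖ ≤ C * ‖g r‖ := by
  obtain ⟨C, hC, hfg⟩ := h.exists_pos
  obtain ⟨δ, hδ, hball⟩ := (nhdsGT_basis 0).eventually_iff.1 hfg.bound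
  exact ⟨C, hC, δ, hδ, fun r hr hrδ => hball ⟨hr, by simpa using hrδ⟩⟩

theorem sinh_sub_self_le_pow_three {r : ℝ} (hr : 0 < r) (hr1 : r ≤ 1) :
    Real.sinh r - r ≤ r ^ 3 := by
  have hpos := Real.exp_bound (x := r) (by rwa [abs_of_pos hr]) (n := 3) (by norm_num)
  have hneg := Real.exp_bound (x := -r) (by rwa [abs_neg, abs_of_pos hr]) (n := 3) (by norm_num)
  norm_num [Finset.sum_range_succ, Nat.factorial, abs_of_pos hr] at hpos hneg
  rw [Real.sinh_eq]
  nlinarith [(abs_le.1 hpos).2, (abs_le.1 hneg).1, pow_pos hr 3]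

theorem isBigO_log_sinh_div_self :
    (fun r => Real.log (Real.sinh r / r)) =O[𝓝[>] 0] fun r => r ^ 2 := by
  refine IsBigO.of_bound 1 ?_
  filter_upwards [Ioo_mem_nhdsGT one_pos] with r ⟨hr, hr1⟩
  have hratio : 1 ≤ Real.sinh r / r := (one_le_div hr).2 (Real.self_le_sinh_iff.2 hr.le)
  have hcubic := sinh_sub_self_le_pow_three hr hr1.le
  rw [one_mul, Real.norm_of_nonneg (Real.log_nonneg hratio), Real.norm_of_nonneg (sq_nonneg r)]
  calc Real.log (Real.sinh r / r) ≤ Real.sinh r / r - 1 := Real.log_le_sub_one_of_pos (by linarith)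
    _ ≤ r ^ 2 := by rw [div_sub_one hr.ne', div_le_iff₀ hr]; linarith

noncomputable def wComplex (α z : ℂ) : ℂ :=
  (1 + α ^ 2 * sinh z ^ 2) ^ (1 / 2 : ℂ)

noncomputable def phiRegular (α z : ℂ) : ℂ :=
  α * log ((α * cosh z + wComplex α z) / (α ^ 2 - 1) ^ (1 / 2 : ℂ)) +
    (1 / 2 : ℂ) * log ((1 - α ^ 2) / (cosh z + wComplex α z) ^ 2) + (Real.log 2 : ℂ) - pfun α

section wComplex
variable (α z : ℂ)

theorem w_eq_wComplex (r : ℝ) : w α r = wComplex α r := by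
  rw [w, wComplex, ofReal_sinh]

theorem wComplex_sq : wComplex α z ^ 2 = 1 + α ^ 2 * sinh z ^ 2 := by
  rw [wComplex, one_div, cpow_ofNat_inv_pow]

theorem re_wComplex_nonneg : 0 ≤ (wComplex α z).re := by
  rw [wComplex, one_div, cpow_inv_two_re]
  exact Real.sqrt_nonneg _

@[simp] theorem wComplex_zero : wComplex α 0 = 1 := by simp [wComplex]

theorem phiRegular_even : (phiRegular α).Even := fun z => by
  simp [phiRegular, wComplex]

end wComplex

/-- `log ((α+1)/√(α²-1))`, written factor by factor so that its imaginary part can be read off. -/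
noncomputable def zeta (α : ℂ) : ℂ :=
  log (α + 1) - (1 / 2 : ℂ) * log (α ^ 2 - 1)

section FirstQuadrant
variable {α : ℂ} (hre : 0 < α.re) (him : 0 < α.im)
include hre him

theorem im_sq_pos : 0 < (α ^ 2).im := by
  rw [sq, mul_im]; positivity

theorem sq_sub_one_ne_zero : α ^ 2 - 1 ≠ 0 := fun h =>
  (im_sq_pos hre him).ne' (by simpa using congrArg im h)

theorem one_sub_sq_ne_zero : 1 - α ^ 2 ≠ 0 := by
  rw [← neg_sub]; exact neg_ne_zero.2 (sq_sub_one_ne_zero hre him)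

theorem exp_zeta : exp (zeta α) = (α + 1) / (α ^ 2 - 1) ^ (1 / 2 : ℂ) := by
  have hα1 : α + 1 ≠ 0 := fun h => him.ne' (by simpa using congrArg im h)
  rw [zeta, exp_sub, exp_log hα1, cpow_def_of_ne_zero (sq_sub_one_ne_zero hre him), mul_comm]

theorem abs_im_zeta_lt : |(zeta α).im| < Real.pi / 2 := by
  have h1 : 0 ≤ arg (α + 1) := arg_nonneg_iff.2 (by simpa using him.le)
  have h2 : arg (α + 1) < Real.pi / 2 := arg_lt_pi_div_two_iff.2 (Or.inl (by simp; linarith))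
  have h3 : 0 ≤ arg (α ^ 2 - 1) := arg_nonneg_iff.2 (by simpa using (im_sq_pos hre him).le)
  have h4 : arg (α ^ 2 - 1) < Real.pi :=
    arg_lt_pi_iff.2 (Or.inr (by simpa using (im_sq_pos hre him).ne'))
  have him_zeta : (zeta α).im = arg (α + 1) - arg (α ^ 2 - 1) / 2 := by
    simp [zeta, log_im]; ring
  rw [him_zeta, abs_lt]
  constructor <;> linarith

theorem log_div_sqrt_eq_zeta : log ((α + 1) / (α ^ 2 - 1) ^ (1 / 2 : ℂ)) = zeta α := by
  have h := abs_lt.1 (abs_im_zeta_lt hre him)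
  rw [← exp_zeta hre him, log_exp (by linarith [Real.pi_pos]) (by linarith [Real.pi_pos])]

theorem log_div_eq_two_mul_zeta : log ((α + 1) / (α - 1)) = 2 * zeta α := by
  have h := abs_lt.1 (abs_im_zeta_lt hre him)
  have hα1 : α - 1 ≠ 0 := fun h => him.ne' (by simpa using congrArg im h)
  have hexp : exp (2 * zeta α) = (α + 1) / (α - 1) := by
    rw [two_mul, exp_add, exp_zeta hre him, div_mul_div_comm, ← sq, ← sq, one_div,
      cpow_ofNat_inv_pow, div_eq_div_iff (sq_sub_one_ne_zero hre him) hα1]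
    ring
  rw [← hexp, log_exp] <;> simp <;> linarith [Real.pi_pos]

theorem phiRegular_zero : phiRegular α 0 = 0 := by
  have hq : log ((1 - α ^ 2) / (1 + 1) ^ 2) = log (1 - α ^ 2) - 2 * Real.log 2 := by
    rw [show (1 - α ^ 2) / (1 + 1) ^ 2 = ((2 ^ 2 : ℝ)⁻¹ : ℝ) * (1 - α ^ 2) by push_cast; ring,
      log_ofReal_mul (by norm_num) (one_sub_sq_ne_zero hre him), Real.log_inv, Real.log_pow]
    push_cast; ring
  simp only [phiRegular, pfun, cosh_zero, wComplex_zero, mul_one, hq,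
    log_div_sqrt_eq_zeta hre him, log_div_eq_two_mul_zeta hre him]
  ring

theorem analyticAt_phiRegular : AnalyticAt ℂ (phiRegular α) 0 := by
  have hw : AnalyticAt ℂ (wComplex α) 0 := by
    unfold wComplex
    apply AnalyticAt.cpow <;> first | fun_prop | simp
  have hsqrt : (α ^ 2 - 1) ^ (1 / 2 : ℂ) ≠ 0 := by
    simp [cpow_def_of_ne_zero (sq_sub_one_ne_zero hre him)]
  have hmem₁ : (α * cosh 0 + wComplex α 0) / (α ^ 2 - 1) ^ (1 / 2 : ℂ) ∈ slitPlane := by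
    rw [cosh_zero, wComplex_zero, mul_one, ← exp_zeta hre him, mem_slitPlane_iff, exp_re]
    have h := abs_lt.1 (abs_im_zeta_lt hre him)
    exact Or.inl (mul_pos (Real.exp_pos _) (Real.cos_pos_of_mem_Ioo ⟨h.1, h.2⟩))
  have hmem₂ : (1 - α ^ 2) / (cosh 0 + wComplex α 0) ^ 2 ∈ slitPlane := by
    rw [cosh_zero, wComplex_zero, mem_slitPlane_iff]
    right
    norm_num
    exact (im_sq_pos hre him).ne'
  unfold phiRegular
  fun_prop (disch := first | assumption | simp)

theorem phi_sub_log_sub_pfun {r : ℝ} (hr : 0 < r) :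
    phi α r - log ((r : ℂ) / 2) - pfun α = phiRegular α r + (Real.log (Real.sinh r / r) : ℂ) := by
  have hsinh : 0 < Real.sinh r := Real.sinh_pos_iff.2 hr
  rw [phi, phiRegular, pfun, w_eq_wComplex, ofReal_cosh]
  set W := wComplex α r
  have hcW : cosh (r : ℂ) + W ≠ 0 := fun h => by
    have := congrArg re h
    rw [← ofReal_cosh, add_re, ofReal_re, zero_re] at this
    linarith [Real.cosh_pos r, re_wComplex_nonneg α r]
  have hfactor : (cosh (r : ℂ) - W) / (cosh (r : ℂ) + W) =
      ((Real.sinh r ^ 2 : ℝ) : ℂ) * ((1 - α ^ 2) / (cosh (r : ℂ) + W) ^ 2) := by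
    rw [mul_div_assoc', div_eq_div_iff hcW (pow_ne_zero 2 hcW)]
    push_cast
    linear_combination (cosh (r : ℂ) + W) * (cosh_sq (r : ℂ) - wComplex_sq α r)
  have hlog_factor : log ((cosh (r : ℂ) - W) / (cosh (r : ℂ) + W)) =
      2 * Real.log (Real.sinh r) + log ((1 - α ^ 2) / (cosh (r : ℂ) + W) ^ 2) := by
    rw [hfactor, log_ofReal_mul (by positivity)
      (div_ne_zero (one_sub_sq_ne_zero hre him) (pow_ne_zero 2 hcW)), Real.log_pow]
    push_cast; ring
  have hlog_half : log ((r : ℂ) / 2) = Real.log r - Real.log 2 := by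
    rw [← ofReal_ofNat, ← ofReal_div, ← ofReal_log (by positivity), Real.log_div hr.ne' two_ne_zero,
      ofReal_sub]
  rw [hlog_factor, hlog_half, Real.log_div hsinh.ne' hr.ne']
  push_cast; ring

end FirstQuadrant

/-- As `r → 0`, `φ(α,r) = log(r/2) + p(α) + O(r²)`. -/
theorem phi_asymptotic_zero (α : ℂ) (hre : 0 < α.re) (him : 0 < α.im) :
    ∃ C > (0 : ℝ), ∃ δ > (0 : ℝ), ∀ r : ℝ, 0 < r → r < δ →
      ‖phi α r - Complex.log ((r : ℂ) / 2) - pfun α‖ ≤ C * r ^ 2 := by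
  have hregular : phiRegular α =O[𝓝 0] fun z => z ^ 2 :=
    (analyticAt_phiRegular hre him).isBigO_sq (phiRegular_zero hre him)
      (phiRegular_even α).deriv_zero
  have hreal : (fun r : ℝ => phiRegular α r) =O[𝓝[>] 0] fun r => r ^ 2 := by
    have h := (hregular.comp_tendsto (continuous_ofReal.tendsto' 0 0 ofReal_zero)).mono
      (nhdsWithin_le_nhds (s := Set.Ioi 0))
    exact isBigO_norm_right.1 (by simpa [Function.comp_def] using isBigO_norm_right.2 h)
  have hlog : (fun r : ℝ => (Real.log (Real.sinh r / r) : ℂ)) =O[𝓝[>] 0] fun r => r ^ 2 :=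
    isBigO_norm_left.1 (by simpa only [norm_real] using isBigO_norm_left.2 isBigO_log_sinh_div_self)
  have hdecomp : (fun r : ℝ => phiRegular α r + (Real.log (Real.sinh r / r) : ℂ)) =ᶠ[𝓝[>] 0]
      fun r : ℝ => phi α r - log ((r : ℂ) / 2) - pfun α :=
    eventually_mem_nhdsWithin.mono fun r hr => (phi_sub_log_sub_pfun hre him hr).symm
  obtain ⟨C, hC, δ, hδ, hbound⟩ :=
    exists_pos_bound_of_isBigO_nhdsGT ((hreal.add hlog).congr' hdecomp EventuallyEq.rfl)
  exact ⟨C, hC, δ, hδ, fun r hr hrδ => by simpa using hbound r hr hrδ⟩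
end

section
/- Fix r > 0. Then H(α,r) → 2·log(tanh(r/2)) as α → 0 with Re α ≥ 0, α ≠ 0. In particular this limit is strictly negative. -/
/-- `H(α,r) = Re[2α log(α cosh r + w) − α log(α²−1)]
  + log|(cosh r − w)/(cosh r + w)|` where `w = √(1 + α² sinh² r)`
(principal branches). -/
noncomputable def H (α : ℂ) (r : ℝ) : ℝ :=
  (2 * α * Complex.log (α * (Real.cosh r : ℂ) + w α r) -
      α * Complex.log (α ^ 2 - 1)).re +
    Real.log ‖((Real.cosh r : ℂ) - w α r) / ((Real.cosh r : ℂ) + w α r)‖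

open Filter Topology

theorem Complex.norm_log_le_abs_log_norm_add_pi (z : ℂ) :
    ‖Complex.log z‖ ≤ |Real.log ‖z‖| + Real.pi := by
  refine (Complex.norm_le_abs_re_add_abs_im _).trans ?_
  rw [Complex.log_re, Complex.log_im]
  exact add_le_add_right (Complex.abs_arg_le_pi z) _

theorem Filter.Tendsto.mul_log_of_ne_zero {ι : Type*} {l : Filter ι} {g f : ι → ℂ}
    {c : ℂ} (hg : Tendsto g l (𝓝 0)) (hf : Tendsto f l (𝓝 c)) (hc : c ≠ 0) :
    Tendsto (fun x => g x * Complex.log (f x)) l (𝓝 0) := by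
  refine hg.zero_mul_isBoundedUnder_le ?_
  have hbound : Tendsto (fun x => |Real.log ‖f x‖| + Real.pi) l
      (𝓝 (|Real.log ‖c‖| + Real.pi)) :=
    ((hf.norm.log (norm_ne_zero_iff.2 hc)).abs).add_const _
  exact hbound.isBoundedUnder_le.mono_le
    (Eventually.of_forall fun x => Complex.norm_log_le_abs_log_norm_add_pi (f x))

theorem Real.cosh_sub_one_div_cosh_add_one (x : ℝ) :
    (cosh x - 1) / (cosh x + 1) = tanh (x / 2) ^ 2 := by
  have hx : cosh x = cosh (x / 2) ^ 2 + sinh (x / 2) ^ 2 := by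
    rw [← cosh_two_mul, mul_div_cancel₀ x two_ne_zero]
  have hsub : cosh x - 1 = 2 * sinh (x / 2) ^ 2 := by rw [hx, cosh_sq]; ring
  have hadd : cosh x + 1 = 2 * cosh (x / 2) ^ 2 := by rw [hx, cosh_sq]; ring
  rw [hsub, hadd, tanh_eq_sinh_div_cosh, div_pow, mul_div_mul_left _ _ two_ne_zero]

theorem Real.log_tanh_half_neg {x : ℝ} (hx : 0 < x) : log (tanh (x / 2)) < 0 := by
  have htanh : 0 < tanh (x / 2) := by
    rw [tanh_eq_sinh_div_cosh]
    exact div_pos (sinh_pos_iff.2 (half_pos hx)) (cosh_pos _)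
  exact log_neg htanh (tanh_lt_one _)

theorem tendsto_w_nhds_zero (r : ℝ) : Tendsto (fun α : ℂ => w α r) (𝓝 0) (𝓝 1) := by
  have hbase : Tendsto (fun α : ℂ => 1 + α ^ 2 * (Real.sinh r : ℂ) ^ 2) (𝓝 0) (𝓝 1) := by
    simpa using (by fun_prop : Continuous fun α : ℂ => 1 + α ^ 2 * (Real.sinh r : ℂ) ^ 2).tendsto 0
  have := hbase.cpow (tendsto_const_nhds (x := (1 / 2 : ℂ))) (by simp [Complex.mem_slitPlane_iff])
  rwa [Complex.one_cpow] at this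

theorem tendsto_re_mul_log_sub_mul_log_nhds_zero (r : ℝ) :
    Tendsto (fun α : ℂ => (2 * α * Complex.log (α * (Real.cosh r : ℂ) + w α r) -
      α * Complex.log (α ^ 2 - 1)).re) (𝓝 0) (𝓝 0) := by
  have hfirst : Tendsto (fun α : ℂ => 2 * α * Complex.log (α * (Real.cosh r : ℂ) + w α r))
      (𝓝 0) (𝓝 0) :=
    Tendsto.mul_log_of_ne_zero (by simpa using (tendsto_id (x := 𝓝 (0 : ℂ))).const_mul 2)
      (by simpa using (tendsto_id.mul_const _).add (tendsto_w_nhds_zero r)) one_ne_zero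
  have hsecond : Tendsto (fun α : ℂ => α * Complex.log (α ^ 2 - 1)) (𝓝 0) (𝓝 0) :=
    tendsto_id.mul_log_of_ne_zero (c := -1)
      (by simpa using ((tendsto_id (x := 𝓝 (0 : ℂ))).pow 2).sub_const 1) (neg_ne_zero.2 one_ne_zero)
  simpa only [sub_zero, Complex.zero_re, Function.comp_def] using
    (Complex.continuous_re.tendsto _).comp (hfirst.sub hsecond)

theorem tendsto_log_norm_cosh_sub_w_div_cosh_add_w_nhds_zero {r : ℝ} (hr : 0 < r) :
    Tendsto (fun α : ℂ =>
        Real.log ‖((Real.cosh r : ℂ) - w α r) / ((Real.cosh r : ℂ) + w α r)‖)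
      (𝓝 0) (𝓝 (2 * Real.log (Real.tanh (r / 2)))) := by
  have hcosh : 1 < Real.cosh r := Real.one_lt_cosh.2 hr.ne'
  have hratio : Tendsto (fun α : ℂ => ((Real.cosh r : ℂ) - w α r) / ((Real.cosh r : ℂ) + w α r))
      (𝓝 0) (𝓝 (((Real.cosh r - 1) / (Real.cosh r + 1) : ℝ) : ℂ)) := by
    have hden : (Real.cosh r : ℂ) + 1 ≠ 0 := by exact_mod_cast (by linarith : Real.cosh r + 1 ≠ 0)
    simp only [Complex.ofReal_div, Complex.ofReal_sub, Complex.ofReal_add, Complex.ofReal_one]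
    exact (tendsto_const_nhds.sub (tendsto_w_nhds_zero r)).div
      (tendsto_const_nhds.add (tendsto_w_nhds_zero r)) hden
  have hlimit_pos : 0 < (Real.cosh r - 1) / (Real.cosh r + 1) := by
    apply div_pos <;> linarith
  have := hratio.norm.log (by
    rw [Complex.norm_real, Real.norm_of_nonneg hlimit_pos.le]; exact hlimit_pos.ne')
  rwa [Complex.norm_real, Real.norm_of_nonneg hlimit_pos.le,
    Real.cosh_sub_one_div_cosh_add_one, Real.log_pow, Nat.cast_ofNat] at this

theorem tendsto_H_nhds_zero {r : ℝ} (hr : 0 < r) :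
    Tendsto (fun α : ℂ => H α r) (𝓝 0) (𝓝 (2 * Real.log (Real.tanh (r / 2)))) := by
  have := (tendsto_re_mul_log_sub_mul_log_nhds_zero r).add
    (tendsto_log_norm_cosh_sub_w_div_cosh_add_w_nhds_zero hr)
  rwa [zero_add] at this

/-- For fixed `r > 0`, `H(α,r) → 2 log(tanh(r/2))` as `α → 0` with `Re α ≥ 0`,
`α ≠ 0`; the limit is strictly negative. -/
theorem H_limit_at_zero (r : ℝ) (hr : 0 < r) :
    Filter.Tendsto (fun α : ℂ => H α r)
        (nhdsWithin 0 {α : ℂ | 0 ≤ α.re ∧ α ≠ 0})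
        (nhds (2 * Real.log (Real.tanh (r / 2)))) ∧
      2 * Real.log (Real.tanh (r / 2)) < 0 :=
  ⟨(tendsto_H_nhds_zero hr).mono_left nhdsWithin_le_nhds,
    by linarith [Real.log_tanh_half_neg hr]⟩
end
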